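/- Let Δ be a nonzero complex 3×3 matrix with A = (tr(ΔΔ†))², B = tr((ΔΔ†)²), C = tr(ΔΔᵀ(ΔΔᵀ)†). If C ≤ A/9, then √A ≤ √C + √(B − C). -/

import Mathlib

/-!
Write `Z = Δᴴ Δ` as `t/3 • 1 + S₀ + i K` with `S₀` real symmetric traceless and `K` real
antisymmetric, and put `u = t/√3`, `v = ‖S₀‖`, `w = ‖K‖` (Frobenius norms). Cycling traces gives
`A = 3u²`, `B = tr Z² = u² + v² + w²` and `C = tr (Z Zᵀ) = u² + v² - w²`.

Let `k` be the axial vector of `K`, so that `w² = 2|k|²`. Positivity of `Z` at the eigenvector of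
`k × ·` for the eigenvalue `-i|k|` gives `t|k|² - kᵀ (Re Z) k ≥ 2|k|³`. As
`kᵀ (Re Z) k = t|k|²/3 + kᵀ S₀ k` and, by Cauchy–Schwarz against the traceless part of `k kᵀ`,
`|kᵀ S₀ k| ≤ √(2/3) |k|² v`, this is the auxiliary inequality `v ≥ w√3 - u√2`. The hypothesis
`C ≤ A/9` gives `w² ≥ 2u²/3 + v²`, so its right-hand side is nonnegative, and squaring yields
`√C ≥ u√3 - w√2 = √A - √(B - C)`.
-/

open Matrix Complex
open scoped ComplexOrder

section
variable {n : Type*}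

theorem Matrix.IsHermitian.im_apply_self {Z : Matrix n n ℂ} (hZ : Z.IsHermitian) (i : n) :
    (Z i i).im = 0 := by
  have := congrArg Complex.im (hZ.apply i i)
  simp only [star_def, conj_im] at this
  linarith

variable [Fintype n]

theorem trace_map_re (Z : Matrix n n ℂ) : (Z.map re).trace = Z.trace.re := by
  simp [trace, Complex.re_sum]

theorem re_trace_mul_transpose_self (Z : Matrix n n ℂ) :
    (Z * Zᵀ).trace.re = ∑ i, ∑ j, ((Z i j).re ^ 2 - (Z i j).im ^ 2) := by
  simp [trace, mul_apply, Complex.re_sum, sq]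

theorem Matrix.IsHermitian.re_trace_mul_self {Z : Matrix n n ℂ} (hZ : Z.IsHermitian) :
    (Z * Z).trace.re = ∑ i, ∑ j, ((Z i j).re ^ 2 + (Z i j).im ^ 2) := by
  nth_rw 2 [← hZ.eq]
  simp [trace, mul_apply, Complex.re_sum, sq]

theorem trace_mul_conjTranspose_mul_mul_conjTranspose (Δ : Matrix n n ℂ) :
    (Δ * Δᴴ * (Δ * Δᴴ)).trace = (Δᴴ * Δ * (Δᴴ * Δ)).trace := by
  rw [← trace_mul_cycle, Matrix.mul_assoc, Matrix.mul_assoc, Matrix.mul_assoc]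

theorem trace_mul_transpose_mul_conjTranspose (Δ : Matrix n n ℂ) :
    (Δ * Δᵀ * (Δ * Δᵀ)ᴴ).trace = (Δᴴ * Δ * (Δᴴ * Δ)ᵀ).trace := by
  rw [conjTranspose_mul, transpose_mul, conjTranspose_transpose_eq_transpose_conjTranspose,
    ← Matrix.mul_assoc, trace_mul_comm]
  simp only [Matrix.mul_assoc]

theorem dotProduct_self_nonneg (k : n → ℝ) : 0 ≤ k ⬝ᵥ k := by
  simpa using dotProduct_self_star_nonneg k

variable [DecidableEq n]

theorem sum_sq_eq_sq_trace_div_add_sum_sq_traceless (S : Matrix n n ℝ) :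
    ∑ i, ∑ j, S i j ^ 2 =
      S.trace ^ 2 / Fintype.card n + ∑ i, ∑ j, (S - (S.trace / Fintype.card n) • 1) i j ^ 2 := by
  rcases isEmpty_or_nonempty n with hn | hn
  · simp
  have hcard : (Fintype.card n : ℝ) ≠ 0 := by positivity
  simp only [Matrix.sub_apply, Matrix.smul_apply, smul_eq_mul, one_apply, sub_sq,
    Finset.sum_add_distrib, Finset.sum_sub_distrib]
  simp [mul_ite, ite_pow, Finset.sum_ite_eq, trace, ← Finset.mul_sum, ← Finset.sum_mul]
  field_simp
  ring

theorem sq_dotProduct_mulVec_le_of_trace_eq_zero {T : Matrix n n ℝ} (hT : T.trace = 0)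
    (k : n → ℝ) :
    (k ⬝ᵥ T *ᵥ k) ^ 2 ≤ (1 - 1 / Fintype.card n) * (k ⬝ᵥ k) ^ 2 * ∑ i, ∑ j, T i j ^ 2 := by
  set c := (k ⬝ᵥ k) / Fintype.card n with hc
  -- Cauchy–Schwarz against `k kᵀ - c • 1`, which has the same pairing with the traceless `T`
  have hCS := Finset.sum_mul_sq_le_sq_mul_sq (Finset.univ : Finset (n × n))
    (fun p => T p.1 p.2) (fun p => k p.1 * k p.2 - c * (1 : Matrix n n ℝ) p.1 p.2)
  simp only [Fintype.sum_prod_type] at hCS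
  have hpair : ∑ i, ∑ j, T i j * (k i * k j - c * (1 : Matrix n n ℝ) i j) = k ⬝ᵥ T *ᵥ k := by
    simp only [mul_sub, Finset.sum_sub_distrib, one_apply, mul_ite, mul_one, mul_zero,
      Finset.sum_ite_eq, Finset.mem_univ, if_true, ← Finset.sum_mul]
    rw [show ∑ i, T i i = T.trace from rfl, hT, zero_mul, sub_zero]
    simp only [dotProduct, mulVec, Finset.mul_sum]
    exact Finset.sum_congr rfl fun i _ => Finset.sum_congr rfl fun j _ => by ring
  have hnorm : ∑ i, ∑ j, (k i * k j - c * (1 : Matrix n n ℝ) i j) ^ 2 =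
      (1 - 1 / Fintype.card n) * (k ⬝ᵥ k) ^ 2 := by
    rcases isEmpty_or_nonempty n with hn | hn
    · simp
    have hcard : (Fintype.card n : ℝ) ≠ 0 := by positivity
    simp only [sub_sq, Finset.sum_add_distrib, Finset.sum_sub_distrib, one_apply]
    simp [mul_ite, ite_pow, Finset.sum_ite_eq, mul_pow, ← Finset.mul_sum, ← Finset.sum_mul,
      dotProduct, hc]
    field_simp
    ring
  rw [hpair, hnorm] at hCS
  linarith

end

-- For Hermitian `Z`, `(Im Z) v = v × imAxial Z`.
def imAxial (Z : Matrix (Fin 3) (Fin 3) ℂ) : Fin 3 → ℝ := ![(Z 1 2).im, (Z 2 0).im, (Z 0 1).im]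

theorem Matrix.IsHermitian.sum_sq_im {Z : Matrix (Fin 3) (Fin 3) ℂ} (hZ : Z.IsHermitian) :
    ∑ i, ∑ j, (Z i j).im ^ 2 = 2 * (imAxial Z ⬝ᵥ imAxial Z) := by
  simp [Fin.sum_univ_three, dotProduct, imAxial, ← hZ.apply 1 0, ← hZ.apply 2 0,
    ← hZ.apply 2 1, hZ.im_apply_self]
  ring

/-- `|k|² x x†`, where `x` is the eigenvector of `k × ·` for the eigenvalue `-i|k|`, scaled so
that `‖x‖² = 2`. -/
noncomputable def helicityMatrix (k : Fin 3 → ℝ) : Matrix (Fin 3) (Fin 3) ℂ :=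
  let s : ℝ := √(k ⬝ᵥ k)
  !![k 1 ^ 2 + k 2 ^ 2, -(k 0 * k 1) - s * k 2 * I, -(k 0 * k 2) + s * k 1 * I;
     -(k 0 * k 1) + s * k 2 * I, k 0 ^ 2 + k 2 ^ 2, -(k 1 * k 2) - s * k 0 * I;
     -(k 0 * k 2) - s * k 1 * I, -(k 1 * k 2) + s * k 0 * I, k 0 ^ 2 + k 1 ^ 2]

theorem helicityMatrix_conjTranspose (k : Fin 3 → ℝ) :
    (helicityMatrix k)ᴴ = helicityMatrix k := by
  ext i j; fin_cases i <;> fin_cases j <;> simp [helicityMatrix, Complex.ext_iff]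

theorem helicityMatrix_mul_self (k : Fin 3 → ℝ) :
    helicityMatrix k * helicityMatrix k = (2 * (k ⬝ᵥ k)) • helicityMatrix k := by
  have hs := Real.sq_sqrt (dotProduct_self_nonneg k)
  unfold helicityMatrix
  generalize √(k ⬝ᵥ k) = s at hs ⊢
  have hsC : (s : ℂ) ^ 2 = k 0 ^ 2 + k 1 ^ 2 + k 2 ^ 2 := by
    simp only [dotProduct, Fin.sum_univ_three] at hs
    exact_mod_cast (by linear_combination hs)
  ext i j
  fin_cases i <;> fin_cases j <;>
    simp [mul_apply, Fin.sum_univ_three, dotProduct] <;> grind [I_sq]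

theorem Matrix.IsHermitian.re_trace_mul_helicityMatrix {Z : Matrix (Fin 3) (Fin 3) ℂ}
    (hZ : Z.IsHermitian) :
    (Z * helicityMatrix (imAxial Z)).trace.re =
      Z.trace.re * (imAxial Z ⬝ᵥ imAxial Z) - imAxial Z ⬝ᵥ Z.map re *ᵥ imAxial Z -
        2 * √(imAxial Z ⬝ᵥ imAxial Z) * (imAxial Z ⬝ᵥ imAxial Z) := by
  unfold helicityMatrix
  generalize √(imAxial Z ⬝ᵥ imAxial Z) = s
  simp [trace_fin_three, mul_apply, Fin.sum_univ_three, ← hZ.apply 1 0, ← hZ.apply 2 0,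
    ← hZ.apply 2 1, hZ.im_apply_self, imAxial, dotProduct, mulVec, sq]
  ring

theorem Matrix.PosSemidef.two_mul_sqrt_mul_imAxial_le {Z : Matrix (Fin 3) (Fin 3) ℂ}
    (hZ : Z.PosSemidef) :
    2 * √(imAxial Z ⬝ᵥ imAxial Z) * (imAxial Z ⬝ᵥ imAxial Z) ≤
      Z.trace.re * (imAxial Z ⬝ᵥ imAxial Z) - imAxial Z ⬝ᵥ Z.map re *ᵥ imAxial Z := by
  set N := helicityMatrix (imAxial Z)
  -- `0 ≤ tr (N Z Nᴴ) = tr (Z N²) = 2|k|² tr (Z N)`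
  have hpos : 0 ≤ (N * Z * Nᴴ).trace.re :=
    (Complex.nonneg_iff.mp (hZ.mul_mul_conjTranspose_same N).trace_nonneg).1
  rw [trace_mul_cycle, trace_mul_comm, helicityMatrix_conjTranspose, helicityMatrix_mul_self,
    Matrix.mul_smul, trace_smul, Complex.smul_re, hZ.1.re_trace_mul_helicityMatrix,
    smul_eq_mul] at hpos
  rcases (dotProduct_self_nonneg (imAxial Z)).eq_or_lt with hq | hq
  · rw [dotProduct_self_eq_zero.mp hq.symm]
    simp
  · have := (mul_nonneg_iff_of_pos_left (by positivity : (0 : ℝ) < 2 * _)).mp hpos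
    linarith

-- `u` is the coordinate of `Z` along `1/√3`; `v` and `w` are the norms of its components along the
-- real symmetric traceless and the imaginary antisymmetric Gell-Mann matrices, normalised by
-- `tr (λₐ λ_b) = δ_ab`.
noncomputable def gellMannU (Z : Matrix (Fin 3) (Fin 3) ℂ) : ℝ := Z.trace.re / √3

noncomputable def gellMannV (Z : Matrix (Fin 3) (Fin 3) ℂ) : ℝ :=
  √(∑ i, ∑ j, (Z.map re - ((Z.map re).trace / 3) • 1) i j ^ 2)

noncomputable def gellMannW (Z : Matrix (Fin 3) (Fin 3) ℂ) : ℝ := √(∑ i, ∑ j, (Z i j).im ^ 2)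

theorem sum_sq_re_eq_gellMannU_sq_add_gellMannV_sq (Z : Matrix (Fin 3) (Fin 3) ℂ) :
    ∑ i, ∑ j, (Z i j).re ^ 2 = gellMannU Z ^ 2 + gellMannV Z ^ 2 := by
  have h := sum_sq_eq_sq_trace_div_add_sum_sq_traceless (Z.map re)
  rw [Fintype.card_fin, Nat.cast_ofNat, trace_map_re] at h
  rw [gellMannU, gellMannV, div_pow, Real.sq_sqrt (by norm_num), Real.sq_sqrt (by positivity),
    trace_map_re]
  simpa using h

theorem sum_sq_im_eq_gellMannW_sq (Z : Matrix (Fin 3) (Fin 3) ℂ) :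
    ∑ i, ∑ j, (Z i j).im ^ 2 = gellMannW Z ^ 2 := by
  rw [gellMannW, Real.sq_sqrt (by positivity)]

theorem Matrix.IsHermitian.re_trace_mul_self_eq_gellMann {Z : Matrix (Fin 3) (Fin 3) ℂ}
    (hZ : Z.IsHermitian) :
    (Z * Z).trace.re = gellMannU Z ^ 2 + gellMannV Z ^ 2 + gellMannW Z ^ 2 := by
  rw [hZ.re_trace_mul_self, ← sum_sq_im_eq_gellMannW_sq,
    ← sum_sq_re_eq_gellMannU_sq_add_gellMannV_sq]
  simp only [Finset.sum_add_distrib]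

theorem re_trace_mul_transpose_self_eq_gellMann (Z : Matrix (Fin 3) (Fin 3) ℂ) :
    (Z * Zᵀ).trace.re = gellMannU Z ^ 2 + gellMannV Z ^ 2 - gellMannW Z ^ 2 := by
  rw [re_trace_mul_transpose_self, ← sum_sq_im_eq_gellMannW_sq,
    ← sum_sq_re_eq_gellMannU_sq_add_gellMannV_sq]
  simp only [Finset.sum_sub_distrib]

theorem Matrix.PosSemidef.gellMannU_nonneg {Z : Matrix (Fin 3) (Fin 3) ℂ} (hZ : Z.PosSemidef) :
    0 ≤ gellMannU Z :=
  div_nonneg (Complex.nonneg_iff.mp hZ.trace_nonneg).1 (Real.sqrt_nonneg 3)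

theorem sqrt_two_mul_sub_le_mul_sqrt_three {s t v X : ℝ} (hs : 0 ≤ s) (ht : 0 ≤ t)
    (hv : 0 ≤ v) (hkey : 2 * s * s ^ 2 ≤ 2 / 3 * t * s ^ 2 - X)
    (hX : X ^ 2 ≤ 2 / 3 * (s ^ 2) ^ 2 * v ^ 2) :
    √2 * (3 * s - t) ≤ v * √3 := by
  rcases le_total (3 * s) t with hst | hst
  · have : √2 * (3 * s - t) ≤ 0 :=
      mul_nonpos_of_nonneg_of_nonpos (Real.sqrt_nonneg 2) (by linarith)
    have : 0 ≤ v * √3 := by positivity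
    linarith
  have hsq : 2 * (3 * s - t) ^ 2 ≤ 3 * v ^ 2 := by
    rcases hs.eq_or_lt with hs0 | hs0
    · subst hs0
      nlinarith [sq_nonneg v]
    have hX' : ((2 * s - 2 / 3 * t) * s ^ 2) ^ 2 ≤ (-X) ^ 2 :=
      pow_le_pow_left₀ (by nlinarith) (by linarith) 2
    rw [neg_sq] at hX'
    have : (s ^ 2) ^ 2 * (2 * (3 * s - t) ^ 2) ≤ (s ^ 2) ^ 2 * (3 * v ^ 2) := by nlinarith
    exact le_of_mul_le_mul_left this (by positivity)
  refine (pow_le_pow_iff_left₀ (by nlinarith [Real.sqrt_nonneg 2]) (by positivity)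
    two_ne_zero).mp ?_
  rw [mul_pow, mul_pow, Real.sq_sqrt zero_le_two, Real.sq_sqrt zero_le_three]
  linarith

theorem Matrix.PosSemidef.gellMannW_mul_sqrt_three_sub_le {Z : Matrix (Fin 3) (Fin 3) ℂ}
    (hZ : Z.PosSemidef) : gellMannW Z * √3 - gellMannU Z * √2 ≤ gellMannV Z := by
  have hkey := hZ.two_mul_sqrt_mul_imAxial_le
  set k := imAxial Z
  set s := √(k ⬝ᵥ k)
  set t := Z.trace.re
  set T := Z.map re - ((Z.map re).trace / 3) • 1
  have hs : s ^ 2 = k ⬝ᵥ k := Real.sq_sqrt (dotProduct_self_nonneg k)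
  have hT : T.trace = 0 := by simp [T, trace_sub, trace_smul]
  have hsplit : k ⬝ᵥ Z.map re *ᵥ k = k ⬝ᵥ T *ᵥ k + t / 3 * (k ⬝ᵥ k) := by
    simp only [T, sub_mulVec, dotProduct_sub, smul_mulVec, one_mulVec, dotProduct_smul,
      trace_map_re, smul_eq_mul, t]
    ring
  have hCS := sq_dotProduct_mulVec_le_of_trace_eq_zero hT k
  have hv : gellMannV Z ^ 2 = ∑ i, ∑ j, T i j ^ 2 := Real.sq_sqrt (by positivity)
  rw [Fintype.card_fin, Nat.cast_ofNat, ← hs, ← hv] at hCS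
  rw [hsplit, ← hs] at hkey
  have hw : gellMannW Z = √2 * s := by
    rw [gellMannW, hZ.1.sum_sq_im, Real.sqrt_mul zero_le_two]
  have hlhs : gellMannW Z * √3 - gellMannU Z * √2 = √2 * (3 * s - t) / √3 := by
    rw [hw, gellMannU]
    field_simp
    linear_combination s * Real.sq_sqrt zero_le_three
  rw [hlhs, div_le_iff₀ (by positivity)]
  exact sqrt_two_mul_sub_le_mul_sqrt_three (X := k ⬝ᵥ T *ᵥ k) (Real.sqrt_nonneg _)
    (Complex.nonneg_iff.mp hZ.trace_nonneg).1 (Real.sqrt_nonneg _) (by linarith)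
    (by linarith)

theorem sqrt_le_sqrt_add_sqrt_of_gellMann (u v w : ℝ) (hu : 0 ≤ u) (hw : 0 ≤ w)
    (haux : w * √3 - u * √2 ≤ v) (h : u ^ 2 + v ^ 2 - w ^ 2 ≤ 3 * u ^ 2 / 9) :
    √(3 * u ^ 2) ≤
      √(u ^ 2 + v ^ 2 - w ^ 2) + √(u ^ 2 + v ^ 2 + w ^ 2 - (u ^ 2 + v ^ 2 - w ^ 2)) := by
  have h2 : √2 ^ 2 = 2 := Real.sq_sqrt (by norm_num)
  have h3 : √3 ^ 2 = 3 := Real.sq_sqrt (by norm_num)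
  have hsqrtA : √(3 * u ^ 2) = u * √3 := by
    rw [Real.sqrt_mul (by norm_num), Real.sqrt_sq hu, mul_comm]
  have hsqrtBC : √(u ^ 2 + v ^ 2 + w ^ 2 - (u ^ 2 + v ^ 2 - w ^ 2)) = w * √2 := by
    rw [show u ^ 2 + v ^ 2 + w ^ 2 - (u ^ 2 + v ^ 2 - w ^ 2) = 2 * w ^ 2 by ring,
      Real.sqrt_mul (by norm_num), Real.sqrt_sq hw, mul_comm]
  rw [hsqrtA, hsqrtBC]
  have hwu : u * √2 ≤ w * √3 := by
    refine (pow_le_pow_iff_left₀ (by positivity) (by positivity) two_ne_zero).mp ?_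
    nlinarith [sq_nonneg v]
  have haux_sq : (w * √3 - u * √2) ^ 2 ≤ v ^ 2 :=
    pow_le_pow_left₀ (sub_nonneg.mpr hwu) haux 2
  rcases le_total (u * √3) (w * √2) with huw | huw
  · linarith [Real.sqrt_nonneg (u ^ 2 + v ^ 2 - w ^ 2)]
  · have : u * √3 - w * √2 ≤ √(u ^ 2 + v ^ 2 - w ^ 2) := by
      refine Real.le_sqrt_of_sq_le ?_
      linear_combination haux_sq + (u ^ 2 - w ^ 2) * h3 + (w ^ 2 - u ^ 2) * h2
    linarith

theorem invariant_inequality_epsilon_general (Δ : Matrix (Fin 3) (Fin 3) ℂ)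
    (A B C : ℝ)
    (hA : A = ((Δ * Δᴴ).trace).re ^ 2)
    (hB : B = ((Δ * Δᴴ * (Δ * Δᴴ)).trace).re)
    (hC : C = ((Δ * Δᵀ * (Δ * Δᵀ)ᴴ).trace).re)
    (h : C ≤ A / 9) :
    Real.sqrt A ≤ Real.sqrt C + Real.sqrt (B - C) := by
  set Z := Δᴴ * Δ
  have hZ : Z.PosSemidef := posSemidef_conjTranspose_mul_self Δ
  have hA' : A = 3 * gellMannU Z ^ 2 := by
    rw [hA, trace_mul_comm, gellMannU, div_pow, Real.sq_sqrt (by norm_num)]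
    ring
  rw [trace_mul_conjTranspose_mul_mul_conjTranspose, hZ.1.re_trace_mul_self_eq_gellMann] at hB
  rw [trace_mul_transpose_mul_conjTranspose, re_trace_mul_transpose_self_eq_gellMann] at hC
  subst hA' hB hC
  exact sqrt_le_sqrt_add_sqrt_of_gellMann _ _ _ hZ.gellMannU_nonneg (Real.sqrt_nonneg _)
    hZ.gellMannW_mul_sqrt_three_sub_le h

/-- If `C ≤ A/9` then `√A ≤ √C + √(B − C)` for a nonzero complex 3×3 matrix. -/
theorem invariant_inequality_epsilon (Δ : Matrix (Fin 3) (Fin 3) ℂ) (hΔ : Δ ≠ 0)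
    (A B C : ℝ)
    (hA : A = ((Δ * Δᴴ).trace).re ^ 2)
    (hB : B = ((Δ * Δᴴ * (Δ * Δᴴ)).trace).re)
    (hC : C = ((Δ * Δᵀ * (Δ * Δᵀ)ᴴ).trace).re)
    (h : C ≤ A / 9) :
    Real.sqrt A ≤ Real.sqrt C + Real.sqrt (B - C) :=
  invariant_inequality_epsilon_general Δ A B C hA hB hC h
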